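/- Let V be a ℂ-vector space with basis (e_i) and n ≥ 2. Then the two-sided ideal of the tensor algebra T(V) generated by all partial symmetrizations 𝒮(v₁^{⊗n₁} ⊗ ⋯ ⊗ v_p^{⊗n_p}) with v₁,…,v_p linearly independent and n₁ + ⋯ + n_p = n equals the two-sided ideal generated by the full symmetrizations Σ_{σ∈S_n} e_{i_{σ(1)}} ⊗ ⋯ ⊗ e_{i_{σ(n)}} of n-tuples of basis vectors; hence the n-exterior algebra can equivalently be presented by the generators e_i and the relations Σ_{σ∈S_n} e_{i_{σ(1)}} ⋯ e_{i_{σ(n)}} = 0. -/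

import Mathlib

/-- The set of partial symmetrizations `𝒮(v₁^{⊗n₁} ⊗ ⋯ ⊗ v_p^{⊗n_p})` in the
tensor algebra, for `v₁,…,v_p` linearly independent and `n₁ + ⋯ + n_p = n`
with all `n_j > 0`: each is the sum of the `n!/(n₁!⋯n_p!)` distinct tensor
monomials obtained by permuting the factors. -/
def partialSyms (V : Type*) [AddCommGroup V] [Module ℂ V] (n : ℕ) :
    Set (TensorAlgebra ℂ V) :=
  {a | ∃ (p : ℕ) (v : Fin p → V), LinearIndependent ℂ v ∧
    ∃ m : Fin p → ℕ, (∀ j, 0 < m j) ∧ (∑ j, m j = n) ∧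
      a = ∑ g ∈ Finset.univ.filter
            (fun g : Fin n → Fin p =>
              ∀ j, (Finset.univ.filter fun i => g i = j).card = m j),
          (List.ofFn fun i => TensorAlgebra.ι ℂ (v (g i))).prod}

/-- The set of full symmetrizations `Σ_{σ∈S_n} e_{i_{σ(1)}} ⊗ ⋯ ⊗ e_{i_{σ(n)}}`
of `n`-tuples of basis vectors. -/
def fullSymsOfBasis {ι : Type*} (V : Type*) [AddCommGroup V] [Module ℂ V]
    (e : Module.Basis ι ℂ V) (n : ℕ) : Set (TensorAlgebra ℂ V) :=
  {a | ∃ w : Fin n → ι,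
    a = ∑ σ : Equiv.Perm (Fin n),
      (List.ofFn fun i => TensorAlgebra.ι ℂ (e (w (σ i)))).prod}

/-! Let `S(w) = ∑_σ w_{σ 0} ⋯ w_{σ (n-1)}` be the full symmetrization, a multilinear map
`Vⁿ → T(V)`. If `w = v ∘ g` with `g : Fin n → Fin p`, then as `σ` runs over the permutations,
`g ∘ σ` runs over the maps with the same fibre sizes `m` as `g`, each one hit `#Stab(g)` times;
hence `S(v ∘ g) = #Stab(g) • 𝒮(v^{⊗m})`. So every partial symmetrization is a nonzero multiple
of a full symmetrization, which by multilinearity lies in the ideal generated by the full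
symmetrizations of basis vectors. Conversely, the full symmetrization of basis vectors
`e_{w 0}, …, e_{w (n-1)}` is a multiple of the partial symmetrization of the distinct vectors
among them, which are linearly independent. -/

open Finset Function

section FiberCard

def fiberCard {α β : Type*} [Fintype α] [DecidableEq β] (g : α → β) (b : β) : ℕ :=
  #{a | g a = b}

def funsWithFiberCard {α β : Type*} [Fintype α] [DecidableEq α] [Fintype β] [DecidableEq β]
    (m : β → ℕ) : Finset (α → β) :=
  {g | ∀ b, #{a | g a = b} = m b}

variable {α β : Type*} [Fintype α] [DecidableEq β]

theorem fiberCard_comp_perm (g : α → β) (σ : Equiv.Perm α) :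
    fiberCard (g ∘ σ) = fiberCard g := by
  funext b
  simp only [fiberCard, ← Fintype.card_subtype]
  exact Fintype.card_congr (σ.subtypeEquiv fun _ => Iff.rfl)

theorem exists_perm_comp_eq_of_fiberCard_eq {g h : α → β} (hgh : fiberCard g = fiberCard h) :
    ∃ σ : Equiv.Perm α, h ∘ σ = g := by
  have φ : ∀ b, {a // g a = b} ≃ {a // h a = b} := fun b =>
    Fintype.equivOfCardEq (by simpa only [fiberCard, Fintype.card_subtype] using congrFun hgh b)
  exact ⟨Equiv.ofFiberEquiv φ, funext (Equiv.ofFiberEquiv_map φ)⟩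

theorem sum_fiberCard (g : α → β) [Fintype β] : ∑ b, fiberCard g b = Fintype.card α := by
  simpa [fiberCard] using
    (card_eq_sum_card_fiberwise (f := g) (s := univ) (t := univ) fun _ _ => mem_univ _).symm

theorem fiberCard_pos {g : α → β} (hg : Surjective g) (b : β) : 0 < fiberCard g b := by
  obtain ⟨a, rfl⟩ := hg b
  exact card_pos.mpr ⟨a, by simp⟩

variable [DecidableEq α]

theorem card_fiber_comp_perm_eq_card_stabilizer (g : α → β) (σ₀ : Equiv.Perm α) :
    #{σ : Equiv.Perm α | g ∘ σ = g ∘ σ₀} = #{τ : Equiv.Perm α | g ∘ τ = g} := by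
  symm
  refine card_equiv (Equiv.mulRight σ₀) fun τ => ?_
  simp only [mem_filter, mem_univ, true_and, Equiv.coe_mulRight, Equiv.Perm.coe_mul]
  exact σ₀.surjective.injective_comp_right.eq_iff.symm

variable [Fintype β]

theorem mem_funsWithFiberCard {m : β → ℕ} {g : α → β} :
    g ∈ funsWithFiberCard m ↔ fiberCard g = m := by
  simp only [funsWithFiberCard, mem_filter, mem_univ, true_and, funext_iff, fiberCard]

theorem image_comp_perm_eq_funsWithFiberCard (g : α → β) :
    univ.image (fun σ : Equiv.Perm α => g ∘ σ) = funsWithFiberCard (fiberCard g) := by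
  ext h
  simp only [mem_image, mem_univ, true_and, mem_funsWithFiberCard]
  constructor
  · rintro ⟨σ, rfl⟩
    exact fiberCard_comp_perm g σ
  · exact exists_perm_comp_eq_of_fiberCard_eq

theorem sum_perm_comp_eq_card_smul_sum {M : Type*} [AddCommMonoid M] (g : α → β)
    (f : (α → β) → M) :
    ∑ σ : Equiv.Perm α, f (g ∘ σ) =
      #{τ : Equiv.Perm α | g ∘ τ = g} • ∑ h ∈ funsWithFiberCard (fiberCard g), f h := by
  rw [sum_comp, image_comp_perm_eq_funsWithFiberCard, smul_sum]
  refine sum_congr rfl fun h hh => ?_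
  rw [← image_comp_perm_eq_funsWithFiberCard, mem_image] at hh
  obtain ⟨σ₀, -, rfl⟩ := hh
  rw [card_fiber_comp_perm_eq_card_stabilizer]

end FiberCard

theorem exists_surjective_injective_comp_eq {α β : Type*} [Finite α] (f : α → β) :
    ∃ (p : ℕ) (g : α → Fin p) (h : Fin p → β),
      Surjective g ∧ Injective h ∧ h ∘ g = f := by
  have : Fintype (Set.range f) := Fintype.ofFinite _
  let φ := Fintype.equivFin (Set.range f)
  exact ⟨_, φ ∘ Set.rangeFactorization f, Subtype.val ∘ φ.symm,
    φ.surjective.comp Set.rangeFactorization_surjective,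
    Subtype.val_injective.comp φ.symm.injective,
    funext fun a => by simp [Set.rangeFactorization]⟩

theorem MultilinearMap.map_mem_of_forall_basis {R M N ι κ : Type*} [CommRing R]
    [AddCommGroup M] [Module R M] [AddCommGroup N] [Module R N] [Finite κ]
    (f : MultilinearMap R (fun _ : κ => M) N) (e : Module.Basis ι R M) (p : Submodule R N)
    (h : ∀ w : κ → ι, f (fun i => e (w i)) ∈ p) (w : κ → M) : f w ∈ p := by
  have hf : p.mkQ.compMultilinearMap f = 0 :=
    Module.Basis.ext_multilinear (fun _ => e) fun w => by
      simpa [Submodule.Quotient.mk_eq_zero] using h w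
  simpa [Submodule.Quotient.mk_eq_zero] using congr($hf w)

theorem TwoSidedIdeal.smul_mem_of_algebra {R A : Type*} [CommSemiring R] [Ring A] [Algebra R A]
    (I : TwoSidedIdeal A) (c : R) {x : A} (hx : x ∈ I) : c • x ∈ I := by
  rw [Algebra.smul_def]
  exact I.mul_mem_left _ _ hx

theorem TwoSidedIdeal.smul_mem_iff_of_ne_zero {K A : Type*} [Field K] [Ring A] [Algebra K A]
    (I : TwoSidedIdeal A) {c : K} (hc : c ≠ 0) {x : A} : c • x ∈ I ↔ x ∈ I :=
  ⟨fun h => by simpa [hc] using I.smul_mem_of_algebra c⁻¹ h, I.smul_mem_of_algebra c⟩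

section Symmetrization

variable (R M : Type*) [CommRing R] [AddCommGroup M] [Module R M] (n : ℕ)

noncomputable def symmetrization : MultilinearMap R (fun _ : Fin n => M) (TensorAlgebra R M) :=
  ∑ σ : Equiv.Perm (Fin n), (TensorAlgebra.tprod R M n).domDomCongr σ

variable {R M n}

theorem symmetrization_apply (w : Fin n → M) :
    symmetrization R M n w = ∑ σ : Equiv.Perm (Fin n), TensorAlgebra.tprod R M n (w ∘ σ) := by
  simp [symmetrization, MultilinearMap.domDomCongr_apply]

theorem symmetrization_comp_eq_card_smul_sum {β : Type*} [Fintype β] [DecidableEq β]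
    (v : β → M) (g : Fin n → β) :
    symmetrization R M n (v ∘ g) =
      #{τ : Equiv.Perm (Fin n) | g ∘ τ = g} •
        ∑ h ∈ funsWithFiberCard (fiberCard g), TensorAlgebra.tprod R M n (v ∘ h) := by
  rw [symmetrization_apply]
  exact sum_perm_comp_eq_card_smul_sum g fun h => TensorAlgebra.tprod R M n (v ∘ h)

end Symmetrization

section TensorAlgebraIdeals

variable {ι V : Type*} [AddCommGroup V] [Module ℂ V] {n : ℕ}

theorem mem_partialSyms {a : TensorAlgebra ℂ V} :
    a ∈ partialSyms V n ↔ ∃ (p : ℕ) (v : Fin p → V), LinearIndependent ℂ v ∧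
      ∃ m : Fin p → ℕ, (∀ j, 0 < m j) ∧ ∑ j, m j = n ∧
        a = ∑ g ∈ funsWithFiberCard m, TensorAlgebra.tprod ℂ V n (v ∘ g) := by
  -- `partialSyms` decides its filter by `Nat.decidableForallFin`, not by
  -- `Fintype.decidableForallFintype` as `funsWithFiberCard` does
  have hfilter (p : ℕ) (m : Fin p → ℕ) :
      ({g | ∀ j, #{i | g i = j} = m j} : Finset (Fin n → Fin p)) = funsWithFiberCard m :=
    (filter_congr_decidable _ _ _).symm
  simp only [partialSyms, Set.mem_ofPred_eq, hfilter, TensorAlgebra.tprod_apply,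
    Function.comp_apply]

theorem mem_fullSymsOfBasis {e : Module.Basis ι ℂ V} {a : TensorAlgebra ℂ V} :
    a ∈ fullSymsOfBasis V e n ↔ ∃ w : Fin n → ι, a = symmetrization ℂ V n (e ∘ w) := by
  simp only [fullSymsOfBasis, Set.mem_ofPred_eq, symmetrization_apply, TensorAlgebra.tprod_apply,
    Function.comp_apply]

theorem symmetrization_mem_span_fullSymsOfBasis (e : Module.Basis ι ℂ V) (w : Fin n → V) :
    symmetrization ℂ V n w ∈ TwoSidedIdeal.span (fullSymsOfBasis V e n) := by
  refine TwoSidedIdeal.mem_asIdeal.mp ((symmetrization ℂ V n).map_mem_of_forall_basis e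
    ((TwoSidedIdeal.span (fullSymsOfBasis V e n)).asIdeal.restrictScalars ℂ) (fun w => ?_) w)
  exact TwoSidedIdeal.mem_asIdeal.mpr
    (TwoSidedIdeal.subset_span (mem_fullSymsOfBasis.mpr ⟨w, rfl⟩))

theorem partialSyms_subset_span_fullSymsOfBasis (e : Module.Basis ι ℂ V) :
    partialSyms V n ⊆ TwoSidedIdeal.span (fullSymsOfBasis V e n) := by
  intro a ha
  obtain ⟨p, v, -, m, -, -, rfl⟩ := mem_partialSyms.mp ha
  obtain hempty | ⟨g, hg⟩ := (funsWithFiberCard (α := Fin n) m).eq_empty_or_nonempty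
  · rw [hempty, sum_empty]
    exact zero_mem _
  obtain rfl := mem_funsWithFiberCard.mp hg
  have hN : (#{τ : Equiv.Perm (Fin n) | g ∘ τ = g} : ℂ) ≠ 0 :=
    Nat.cast_ne_zero.mpr (card_ne_zero.mpr ⟨1, by simp⟩)
  rw [SetLike.mem_coe, ← TwoSidedIdeal.smul_mem_iff_of_ne_zero _ hN, Nat.cast_smul_eq_nsmul,
    ← symmetrization_comp_eq_card_smul_sum]
  exact symmetrization_mem_span_fullSymsOfBasis e _

theorem fullSymsOfBasis_subset_span_partialSyms (e : Module.Basis ι ℂ V) :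
    fullSymsOfBasis V e n ⊆ TwoSidedIdeal.span (partialSyms V n) := by
  intro a ha
  obtain ⟨w, rfl⟩ := mem_fullSymsOfBasis.mp ha
  obtain ⟨p, g, b, hg, hb, rfl⟩ := exists_surjective_injective_comp_eq w
  rw [← Function.comp_assoc, symmetrization_comp_eq_card_smul_sum]
  refine TwoSidedIdeal.nsmul_mem _ _ (TwoSidedIdeal.subset_span (mem_partialSyms.mpr ?_))
  exact ⟨p, e ∘ b, e.linearIndependent.comp b hb, fiberCard g, fiberCard_pos hg,
    (sum_fiberCard g).trans (Fintype.card_fin n), rfl⟩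

end TensorAlgebraIdeals

theorem partialSyms_span_eq_fullSyms_span_general
    {ι : Type*} (V : Type*) [AddCommGroup V] [Module ℂ V]
    (e : Module.Basis ι ℂ V) (n : ℕ) :
    TwoSidedIdeal.span (partialSyms V n) =
      TwoSidedIdeal.span (fullSymsOfBasis V e n) :=
  le_antisymm (TwoSidedIdeal.span_le.mpr (partialSyms_subset_span_fullSymsOfBasis e))
    (TwoSidedIdeal.span_le.mpr (fullSymsOfBasis_subset_span_partialSyms e))

/-- The two-sided ideal generated by all partial symmetrizations of
linearly independent vectors equals the two-sided ideal generated by the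
full symmetrizations of `n`-tuples of basis vectors; hence the `n`-exterior
algebra is presented by the generators `e_i` and the relations
`Σ_{σ∈S_n} e_{i_{σ(1)}} ⋯ e_{i_{σ(n)}} = 0`. -/
theorem partialSyms_span_eq_fullSyms_span
    {ι : Type*} (V : Type*) [AddCommGroup V] [Module ℂ V]
    (e : Module.Basis ι ℂ V) (n : ℕ) (hn : 2 ≤ n) :
    TwoSidedIdeal.span (partialSyms V n) =
      TwoSidedIdeal.span (fullSymsOfBasis V e n) :=
  partialSyms_span_eq_fullSyms_span_general V e n
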